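/- Monotonicity in the inverse temperature: for every N ≥ 1 and every loop γ supported in B_N with 𝒞_γ nonempty, the map β ↦ E_{N,β}[W_γ] is nondecreasing on [0,∞); i.e. for all 0 ≤ β₁ ≤ β₂, E_{N,β₁}[W_γ] ≤ E_{N,β₂}[W_γ]. -/

import Mathlib

open scoped Classical

namespace LGT

/-- A site (vertex) of the lattice `ℤ^m`. -/
abbrev Site (m : ℕ) := Fin m → ℤ

/-- The `i`-th unit vector. -/
def unitVec (m : ℕ) (i : Fin m) : Site m := fun j => if j = i then 1 else 0

/-- An oriented nearest-neighbour edge of `ℤ^m`: it joins `base` and `base + e_dir`,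
oriented from `base` to `base + e_dir` when `ori = true`, and oppositely otherwise. -/
structure OEdge (m : ℕ) where
  base : Site m
  dir : Fin m
  ori : Bool
deriving DecidableEq

/-- An oriented plaquette of `ℤ^m` (valid when `dir1 < dir2`): the unit square with
corners `base, base + e_dir1, base + e_dir2, base + e_dir1 + e_dir2`, positively
oriented when `ori = true`. -/
structure OPlaq (m : ℕ) where
  base : Site m
  dir1 : Fin m
  dir2 : Fin m
  ori : Bool
deriving DecidableEq

/-- The same edge with reversed orientation. -/
def OEdge.neg {m : ℕ} (e : OEdge m) : OEdge m := ⟨e.base, e.dir, !e.ori⟩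

/-- The same plaquette with reversed orientation. -/
def OPlaq.neg {m : ℕ} (p : OPlaq m) : OPlaq m := ⟨p.base, p.dir1, p.dir2, !p.ori⟩

/-- The source vertex of an oriented edge. -/
def OEdge.src {m : ℕ} (e : OEdge m) : Site m :=
  if e.ori then e.base else e.base + unitVec m e.dir

/-- The target vertex of an oriented edge. -/
def OEdge.tgt {m : ℕ} (e : OEdge m) : Site m :=
  if e.ori then e.base + unitVec m e.dir else e.base

/-- `x ∈ B_N = [-N,N]^m ∩ ℤ^m`. -/
def inBox (m N : ℕ) (x : Site m) : Prop := ∀ i, |x i| ≤ (N : ℤ)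

/-- `C_1(B_N)`: oriented edges with both endpoints in `B_N`. -/
def C1 (m N : ℕ) : Set (OEdge m) :=
  {e | inBox m N e.base ∧ inBox m N (e.base + unitVec m e.dir)}

/-- The four corners of a plaquette. -/
def OPlaq.corners {m : ℕ} (p : OPlaq m) : List (Site m) :=
  [p.base, p.base + unitVec m p.dir1, p.base + unitVec m p.dir2,
    p.base + unitVec m p.dir1 + unitVec m p.dir2]

/-- The four oriented boundary edges of an oriented plaquette. -/
def OPlaq.bdry {m : ℕ} (p : OPlaq m) : List (OEdge m) :=
  let l : List (OEdge m) :=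
    [⟨p.base, p.dir1, true⟩, ⟨p.base + unitVec m p.dir1, p.dir2, true⟩,
     ⟨p.base + unitVec m p.dir2, p.dir1, false⟩, ⟨p.base, p.dir2, false⟩]
  if p.ori then l else l.map OEdge.neg

/-- `C_2(B_N)`: oriented plaquettes with all corners in `B_N`. -/
def C2 (m N : ℕ) : Set (OPlaq m) :=
  {p | p.dir1 < p.dir2 ∧ ∀ x ∈ p.corners, inBox m N x}

/-- `C_2(B_N)^+`: positively oriented plaquettes of `C_2(B_N)`. -/
def C2plus (m N : ℕ) : Set (OPlaq m) := {p | p ∈ C2 m N ∧ p.ori = true}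

/-- `supp ∂̂e`: the plaquettes of `C_2(B_N)` whose oriented boundary contains `e`. -/
def cob (m N : ℕ) (e : OEdge m) : Set (OPlaq m) := {p | p ∈ C2 m N ∧ e ∈ p.bdry}

/-- A loop: a finitely supported `ℤ`-valued function on oriented edges with values in
`{-1,0,1}`, odd under orientation reversal, whose boundary vanishes as a `0`-chain. -/
structure IsLoop (m : ℕ) (γ : OEdge m → ℤ) : Prop where
  finite_supp : (Function.support γ).Finite
  vals : ∀ e, γ e = -1 ∨ γ e = 0 ∨ γ e = 1
  antisym : ∀ e, γ (OEdge.neg e) = - γ e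
  bdry_zero : ∀ v : Site m,
    (∑ᶠ e : OEdge m, γ e *
      ((if OEdge.tgt e = v then 1 else 0) - (if OEdge.src e = v then (1 : ℤ) else 0))) = 0

/-- A loop supported in `B_N`. -/
def LoopIn (m N : ℕ) (γ : OEdge m → ℤ) : Prop :=
  IsLoop m γ ∧ ∀ e, γ e ≠ 0 → e ∈ C1 m N

/-- `Ω^1(B_N, ℤ₂)`: `ℤ₂`-valued one-forms on `C_1(B_N)`. -/
def Omega1 (m N : ℕ) : Set (OEdge m → ZMod 2) :=
  {σ | (∀ e, e ∉ C1 m N → σ e = 0) ∧ ∀ e, σ (OEdge.neg e) = - σ e}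

/-- The natural representation `ρ(g) = e^{iπ g} ∈ {±1}` of `ℤ₂`. -/
noncomputable def rho (g : ZMod 2) : ℝ := if g = 0 then 1 else -1

/-- The exterior derivative `dσ(p) = Σ_{e ∈ ∂p} σ(e)`. -/
def dOne {m : ℕ} (σ : OEdge m → ZMod 2) (p : OPlaq m) : ZMod 2 := (p.bdry.map σ).sum

/-- The Wilson action `S(σ) = -Σ_{p ∈ C_2(B_N)} ρ(dσ(p))`. -/
noncomputable def action (m N : ℕ) (σ : OEdge m → ZMod 2) : ℝ :=
  - ∑ᶠ p ∈ C2 m N, rho (dOne σ p)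

/-- The Wilson loop variable `W_γ(σ) = Π_{e ∈ (supp γ)^+} ρ(σ(e))`. -/
noncomputable def wilson (m : ℕ) (γ : OEdge m → ℤ) (σ : OEdge m → ZMod 2) : ℝ :=
  ∏ᶠ e ∈ {e : OEdge m | γ e ≠ 0 ∧ e.ori = true}, rho (σ e)

/-- `Z_{β,N}[γ] = Σ_{σ ∈ Ω^1(B_N,ℤ₂)} W_γ(σ) e^{-β S(σ)}`. -/
noncomputable def Z (m N : ℕ) (β : ℝ) (γ : OEdge m → ℤ) : ℝ :=
  ∑ᶠ σ ∈ Omega1 m N, wilson m γ σ * Real.exp (- β * action m N σ)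

/-- The finite-volume Gibbs expectation `E_{N,β}[f]`. -/
noncomputable def Eexp (m N : ℕ) (β : ℝ) (f : (OEdge m → ZMod 2) → ℝ) : ℝ :=
  (∑ᶠ σ ∈ Omega1 m N, f σ * Real.exp (- β * action m N σ)) /
    (∑ᶠ σ ∈ Omega1 m N, Real.exp (- β * action m N σ))

/-- `E_{N,β}[W_γ]`. -/
noncomputable def Ewilson (m N : ℕ) (β : ℝ) (γ : OEdge m → ℤ) : ℝ :=
  Eexp m N β (wilson m γ)

/-- A current: an integer-valued `2`-form on `C_2(B_N)` that is nonnegative on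
positively oriented plaquettes. -/
def IsCurrent (m N : ℕ) (n : OPlaq m → ℤ) : Prop :=
  (∀ p, p ∉ C2 m N → n p = 0) ∧ (∀ p, n (OPlaq.neg p) = - n p) ∧
    (∀ p ∈ C2plus m N, 0 ≤ n p)

/-- `𝒞_γ`: the currents with source `γ`. -/
def CurSet (m N : ℕ) (γ : OEdge m → ℤ) : Set (OPlaq m → ℤ) :=
  {n | IsCurrent m N n ∧ ∀ e ∈ C1 m N,
      ((γ e : ZMod 2) + ∑ᶠ p ∈ cob m N e, ((n p : ZMod 2))) = 0}

/-- The weight `w_β(n) = Π_{p ∈ C_2(B_N)^+} (2β)^{n(p)}/n(p)!` of a current. -/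
noncomputable def wgt (m N : ℕ) (β : ℝ) (n : OPlaq m → ℤ) : ℝ :=
  ∏ᶠ p ∈ C2plus m N, (2 * β) ^ (n p).toNat / (Nat.factorial (n p).toNat)

/-- `q ≤ n` on positively oriented plaquettes. -/
def leOn (m N : ℕ) (q n : OPlaq m → ℤ) : Prop := ∀ p ∈ C2plus m N, q p ≤ n p

/-- `𝒫_γ^{ht}`: `ℤ₂`-valued `2`-forms on `C_2(B_N)` with `δω = γ (mod 2)`. -/
def HTset (m N : ℕ) (γ : OEdge m → ℤ) : Set (OPlaq m → ZMod 2) :=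
  {ω | (∀ p, p ∉ C2 m N → ω p = 0) ∧ (∀ p, ω (OPlaq.neg p) = - ω p) ∧
    ∀ e ∈ C1 m N, (∑ᶠ p ∈ cob m N e, ω p) = (γ e : ZMod 2)}

/-- `(supp ω)^+`. -/
def suppPlus (m N : ℕ) (ω : OPlaq m → ZMod 2) : Set (OPlaq m) :=
  {p | p ∈ C2plus m N ∧ ω p ≠ 0}

/-- The high-temperature weight `(tanh 2β)^{|(supp ω)^+|}`. -/
noncomputable def htWeight (m N : ℕ) (β : ℝ) (ω : OPlaq m → ZMod 2) : ℝ :=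
  Real.tanh (2 * β) ^ (Nat.card ↥(suppPlus m N ω))

/-- The high-temperature model `P^γ_{B_N,β}`: probability mass of `ω ∈ 𝒫_γ^{ht}`. -/
noncomputable def htProb (m N : ℕ) (β : ℝ) (γ : OEdge m → ℤ) (ω : OPlaq m → ZMod 2) : ℝ :=
  htWeight m N β ω / ∑ᶠ ω' ∈ HTset m N γ, htWeight m N β ω'

/-- The random current model `𝐏^γ_{B_N,β}`: probability of an event `A ⊆ 𝒞_γ`. -/
noncomputable def rcProb (m N : ℕ) (β : ℝ) (γ : OEdge m → ℤ) (A : Set (OPlaq m → ℤ)) : ℝ :=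
  (∑' n : ↥(CurSet m N γ ∩ A), wgt m N β n) / (∑' n : ↥(CurSet m N γ), wgt m N β n)

/-- The trace `n̂` of a current: the set of positively oriented plaquettes where `n > 0`. -/
def hatCur (m N : ℕ) (n : OPlaq m → ℤ) : Set (OPlaq m) :=
  {p | p ∈ C2plus m N ∧ 0 < n p}

/-- The probability that iid Bernoulli plaquette percolation `Ψ_q` on `C_2(B_N)^+`
produces exactly the configuration (subset) `A`. -/
noncomputable def bernoulli (m N : ℕ) (q : ℝ) (A : Set (OPlaq m)) : ℝ :=
  ∏ᶠ p ∈ C2plus m N, (if p ∈ A then q else 1 - q)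

/-- `∂P ≡ γ (mod 2)`: for every edge `e ∈ C_1(B_N)` the number of plaquettes of `P`
whose boundary contains `e` or `-e` is congruent to `γ(e)` mod `2`. -/
def BdryCong (m N : ℕ) (P : Set (OPlaq m)) (γ : OEdge m → ℤ) : Prop :=
  ∀ e ∈ C1 m N,
    ((Nat.card ↥{p ∈ P | e ∈ p.bdry ∨ OEdge.neg e ∈ p.bdry} : ZMod 2)) = (γ e : ZMod 2)

/-- `𝒫_γ`: subsets of `C_2(B_N)^+` containing a subset with boundary `γ (mod 2)`. -/
def PlaqSet (m N : ℕ) (γ : OEdge m → ℤ) : Set (Set (OPlaq m)) :=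
  {P | P ⊆ C2plus m N ∧ ∃ P', P' ⊆ P ∧ BdryCong m N P' γ}

/-- `N₀(P)`: the number of `σ ∈ Ω^1(B_N,ℤ₂)` with `dσ(p) = 0` for all `p ∈ P`. -/
noncomputable def N0 (m N : ℕ) (P : Set (OPlaq m)) : ℕ :=
  Nat.card ↥{σ ∈ Omega1 m N | ∀ p ∈ P, dOne σ p = 0}

/-- The random cluster weight `N₀(P) q^{|P|} (1-q)^{|C_2(B_N)^+ ∖ P|}`. -/
noncomputable def rcmWeight (m N : ℕ) (q : ℝ) (P : Set (OPlaq m)) : ℝ :=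
  (N0 m N P : ℝ) * q ^ (Nat.card ↥P) * (1 - q) ^ (Nat.card ↥(C2plus m N \ P))

/-- The random cluster model `φ^γ_{B_N,q}`: probability mass of `P` (zero off `𝒫_γ`). -/
noncomputable def rcmProb (m N : ℕ) (q : ℝ) (γ : OEdge m → ℤ) (P : Set (OPlaq m)) : ℝ :=
  (if P ∈ PlaqSet m N γ then rcmWeight m N q P else 0) /
    ∑ᶠ P' ∈ PlaqSet m N γ, rcmWeight m N q P'

/-- `S_γ(P)`: the subsets of `P` with boundary `γ (mod 2)`. -/
def Sset (m N : ℕ) (γ : OEdge m → ℤ) (P : Set (OPlaq m)) : Set (Set (OPlaq m)) :=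
  {P' | P' ⊆ P ∧ BdryCong m N P' γ}

/-- The `ℤ₂`-valued `2`-form whose support among positively oriented plaquettes is `P'`. -/
noncomputable def formOf {m : ℕ} (P' : Set (OPlaq m)) : OPlaq m → ZMod 2 :=
  fun p => if p ∈ P' ∨ OPlaq.neg p ∈ P' then 1 else 0

/-- The vertices of the support of a loop. -/
def vertsOf (m : ℕ) (γ : OEdge m → ℤ) : Set (Site m) :=
  {x | ∃ e, γ e ≠ 0 ∧ (x = OEdge.src e ∨ x = OEdge.tgt e)}

/-- The graph (`ℓ¹`) distance between two sites of `ℤ^m`. -/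
def distL1 (m : ℕ) (x y : Site m) : ℕ := ∑ i, (x i - y i).natAbs

/-- The minimal graph distance between the supports of two loops. -/
noncomputable def suppDist (m : ℕ) (γ γ' : OEdge m → ℤ) : ℕ :=
  sInf {d | ∃ x ∈ vertsOf m γ, ∃ y ∈ vertsOf m γ', d = distL1 m x y}

/-- `area(γ) = min_{n ∈ 𝒞_γ} Σ_{p ∈ C_2(B_N)^+} n(p)`. -/
noncomputable def areaOf (m N : ℕ) (γ : OEdge m → ℤ) : ℕ :=
  sInf {k : ℕ | ∃ n ∈ CurSet m N γ, (∑ᶠ p ∈ C2plus m N, n p) = (k : ℤ)}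

/-- Translation of a loop by a lattice vector. -/
def translate (m : ℕ) (v : Site m) (γ : OEdge m → ℤ) : OEdge m → ℤ :=
  fun e => γ ⟨e.base - v, e.dir, e.ori⟩

/-- The site `a·e₀ + b·e₁` in the fixed coordinate plane spanned by the first two
coordinate directions. -/
def planeSite (m : ℕ) (h : 1 < m) (a b : ℤ) : Site m :=
  fun j => if j = (⟨0, by omega⟩ : Fin m) then a else if j = (⟨1, h⟩ : Fin m) then b else 0

/-- The axis-parallel rectangular loop `γ_{R,T}` with corners `0, R·e₀, R·e₀+T·e₁, T·e₁`
in the fixed coordinate plane spanned by the first two coordinate directions. -/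
noncomputable def rectLoop (m : ℕ) (h : 1 < m) (R T : ℕ) : OEdge m → ℤ := fun e =>
  (∑ k ∈ Finset.range R,
    ((if e = ⟨planeSite m h k 0, ⟨0, by omega⟩, true⟩ then (1 : ℤ) else 0)
      - (if e = OEdge.neg ⟨planeSite m h k 0, ⟨0, by omega⟩, true⟩ then 1 else 0)
      - (if e = ⟨planeSite m h k T, ⟨0, by omega⟩, true⟩ then 1 else 0)
      + (if e = OEdge.neg ⟨planeSite m h k T, ⟨0, by omega⟩, true⟩ then 1 else 0)))
  + (∑ k ∈ Finset.range T,
    ((if e = ⟨planeSite m h R k, ⟨1, h⟩, true⟩ then (1 : ℤ) else 0)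
      - (if e = OEdge.neg ⟨planeSite m h R k, ⟨1, h⟩, true⟩ then 1 else 0)
      - (if e = ⟨planeSite m h 0 k, ⟨1, h⟩, true⟩ then 1 else 0)
      + (if e = OEdge.neg ⟨planeSite m h 0 k, ⟨1, h⟩, true⟩ then 1 else 0)))

end LGT

/-!
Ginibre's argument. `Ω¹(B_N, ℤ₂)` is a finite abelian group, and both the plaquette
variables `σ ↦ ρ(dσ(p))` and `W_γ` are `±1`-valued characters of it, so `E_{N,β}[W_γ]` is
the Gibbs mean of a character for a Boltzmann weight `∏_p exp(J_p ε_p)` built from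
characters `ε_p`. Writing `exp(J ε) = cosh J + ε sinh J` expands the weight into characters
with coefficients `≥ 0` when `J ≥ 0`, and character sums over a finite group are `|G|` or `0`:
this is Griffiths' first inequality. For monotonicity, duplicate the system and substitute
`τ = σ + q` in the difference of cross products
`Z_{β₁} Z_{β₂} (E_{β₂}[χ] - E_{β₁}[χ])`; it becomes `∑_q (1 - χ(q))` times a Griffiths sum
with couplings `β₂ + β₁ ε_p(q) ≥ β₂ - β₁ ≥ 0`.
-/

namespace AddChar

variable {G : Type*} [AddGroup G]

lemma eq_one_or_eq_neg_one [Finite G] (ψ : AddChar G ℝ) (a : G) : ψ a = 1 ∨ ψ a = -1 := by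
  have h : ψ a ^ Nat.card G = 1 := by
    rw [← map_nsmul_eq_pow, card_nsmul_eq_zero', map_zero_eq_one]
  exact ((pow_eq_one_iff_of_ne_zero Nat.card_pos.ne').1 h).imp_right And.left

lemma sum_nonneg [Fintype G] (ψ : AddChar G ℝ) : 0 ≤ ∑ a, ψ a := by
  classical
  rw [sum_eq_ite]
  split_ifs <;> positivity

end AddChar

lemma Real.exp_mul_eq_cosh_add_sinh_mul {s : ℝ} (hs : s = 1 ∨ s = -1) (J : ℝ) :
    Real.exp (J * s) = Real.sinh J * s + Real.cosh J := by
  rcases hs with rfl | rfl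
  · rw [mul_one, mul_one, Real.sinh_add_cosh]
  · rw [mul_neg_one, mul_neg_one, ← Real.cosh_sub_sinh]
    ring

section Ginibre

variable {G ι : Type*} [AddCommGroup G] (P : Finset ι) (ε : ι → AddChar G ℝ)

noncomputable def boltzmann (J : ι → ℝ) (g : G) : ℝ := ∏ p ∈ P, Real.exp (J p * ε p g)

lemma boltzmann_pos (J : ι → ℝ) (g : G) : 0 < boltzmann P ε J g :=
  Finset.prod_pos fun _ _ => Real.exp_pos _

theorem sum_char_mul_boltzmann_nonneg [Fintype G] (χ : AddChar G ℝ) {J : ι → ℝ}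
    (hJ : ∀ p ∈ P, 0 ≤ J p) :
    0 ≤ ∑ g, χ g * boltzmann P ε J g := by
  have expand : ∀ g, boltzmann P ε J g = ∑ T ∈ P.powerset,
      ((∏ p ∈ T, Real.sinh (J p)) * ∏ p ∈ P \ T, Real.cosh (J p)) * (∏ p ∈ T, ε p) g := by
    intro g
    simp only [boltzmann, Real.exp_mul_eq_cosh_add_sinh_mul ((ε _).eq_one_or_eq_neg_one g),
      Finset.prod_add, Finset.prod_mul_distrib, AddChar.prod_apply]
    exact Finset.sum_congr rfl fun T _ => by ring
  simp only [expand, Finset.mul_sum]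
  rw [Finset.sum_comm]
  refine Finset.sum_nonneg fun T hT => ?_
  have hcoeff : 0 ≤ (∏ p ∈ T, Real.sinh (J p)) * ∏ p ∈ P \ T, Real.cosh (J p) :=
    mul_nonneg
      (Finset.prod_nonneg fun p hp =>
        Real.sinh_nonneg_iff.2 (hJ p (Finset.mem_powerset.1 hT hp)))
      (Finset.prod_nonneg fun p _ => (Real.cosh_pos _).le)
  calc 0 ≤ _ * ∑ g, (χ * ∏ p ∈ T, ε p) g := mul_nonneg hcoeff (AddChar.sum_nonneg _)
    _ = _ := by
      rw [Finset.mul_sum]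
      exact Finset.sum_congr rfl fun g _ => by rw [AddChar.mul_apply]; ring

lemma boltzmann_mul_boltzmann_add (β₁ β₂ : ℝ) (σ q : G) :
    boltzmann P ε (fun _ => β₂) σ * boltzmann P ε (fun _ => β₁) (σ + q)
      = boltzmann P ε (fun p => β₂ + β₁ * ε p q) σ := by
  simp only [boltzmann, ← Finset.prod_mul_distrib, ← Real.exp_add, AddChar.map_add_eq_mul]
  exact Finset.prod_congr rfl fun p _ => by ring_nf

lemma boltzmann_cross_difference_eq [Fintype G] (χ : AddChar G ℝ) (β₁ β₂ : ℝ) :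
    (∑ g, χ g * boltzmann P ε (fun _ => β₂) g) * ∑ g, boltzmann P ε (fun _ => β₁) g
        - (∑ g, χ g * boltzmann P ε (fun _ => β₁) g) * ∑ g, boltzmann P ε (fun _ => β₂) g
      = ∑ q, (1 - χ q) * ∑ σ, χ σ * boltzmann P ε (fun p => β₂ + β₁ * ε p q) σ := by
  set B₁ := boltzmann P ε fun _ => β₁
  set B₂ := boltzmann P ε fun _ => β₂
  calc _ = ∑ σ, ∑ τ, (χ σ - χ τ) * (B₂ σ * B₁ τ) := by
        rw [Finset.sum_mul_sum, Finset.sum_mul_sum]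
        conv_lhs => arg 2; rw [Finset.sum_comm]
        simp only [← Finset.sum_sub_distrib]
        exact Finset.sum_congr rfl fun σ _ => Finset.sum_congr rfl fun τ _ => by ring
    _ = ∑ σ, ∑ q, (χ σ - χ (σ + q)) * (B₂ σ * B₁ (σ + q)) :=
        Finset.sum_congr rfl fun σ _ =>
          (Fintype.sum_equiv (Equiv.addLeft σ) _ _ fun _ => rfl).symm
    _ = ∑ σ, ∑ q, (1 - χ q) * (χ σ * boltzmann P ε (fun p => β₂ + β₁ * ε p q) σ) := by
        simp only [B₁, B₂, boltzmann_mul_boltzmann_add, AddChar.map_add_eq_mul]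
        exact Finset.sum_congr rfl fun σ _ => Finset.sum_congr rfl fun q _ => by ring
    _ = _ := by
        rw [Finset.sum_comm]
        simp only [Finset.mul_sum]

theorem gibbs_mean_mono [Fintype G] (χ : AddChar G ℝ) {β₁ β₂ : ℝ} (h₀ : 0 ≤ β₁)
    (h₁₂ : β₁ ≤ β₂) :
    (∑ g, χ g * boltzmann P ε (fun _ => β₁) g) / ∑ g, boltzmann P ε (fun _ => β₁) g
      ≤ (∑ g, χ g * boltzmann P ε (fun _ => β₂) g) / ∑ g, boltzmann P ε (fun _ => β₂) g := by
  have hZ : ∀ β : ℝ, 0 < ∑ g, boltzmann P ε (fun _ => β) g := fun β =>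
    Finset.sum_pos (fun g _ => boltzmann_pos P ε _ g) Finset.univ_nonempty
  rw [div_le_div_iff₀ (hZ β₁) (hZ β₂), ← sub_nonneg, boltzmann_cross_difference_eq]
  refine Finset.sum_nonneg fun q _ => mul_nonneg ?_ (sum_char_mul_boltzmann_nonneg P ε χ ?_)
  · rcases χ.eq_one_or_eq_neg_one q with h | h <;> rw [h] <;> norm_num
  · intro p _
    rcases (ε p).eq_one_or_eq_neg_one q with h | h <;> rw [h] <;> linarith

end Ginibre

namespace LGT

noncomputable def rhoChar : AddChar (ZMod 2) ℝ where
  toFun := rho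
  map_zero_eq_one' := if_pos rfl
  map_add_eq_mul' a b := by
    have h : ∀ x : ZMod 2, x = 0 ∨ x = 1 := by decide
    rcases h a with rfl | rfl <;> rcases h b with rfl | rfl <;>
      simp [rho, show (1 : ZMod 2) + 1 = 0 from rfl]

def dOneHom {m : ℕ} (p : OPlaq m) : (OEdge m → ZMod 2) →+ ZMod 2 where
  toFun σ := dOne σ p
  map_zero' := by simp [dOne, Pi.zero_def]
  map_add' σ τ := List.sum_map_add

noncomputable def plaqChar {m : ℕ} (p : OPlaq m) : AddChar (OEdge m → ZMod 2) ℝ :=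
  rhoChar.compAddMonoidHom (dOneHom p)

noncomputable def wilsonChar {m : ℕ} {γ : OEdge m → ℤ} (hγ : (Function.support γ).Finite) :
    AddChar (OEdge m → ZMod 2) ℝ where
  toFun := wilson m γ
  map_zero_eq_one' := finprod_mem_eq_one_of_forall_eq_one fun _ _ => rhoChar.map_zero_eq_one
  map_add_eq_mul' σ τ := by
    rw [wilson, wilson, wilson, ← finprod_mem_mul_distrib (hγ.subset fun _ he => he.1)]
    exact finprod_mem_congr rfl fun e _ => rhoChar.map_add_eq_mul (σ e) (τ e)

def omega1Subgroup (m N : ℕ) : AddSubgroup (OEdge m → ZMod 2) where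
  carrier := Omega1 m N
  zero_mem' := ⟨fun _ _ => rfl, fun _ => neg_zero.symm⟩
  add_mem' {σ τ} hσ hτ := ⟨fun e he => by simp [hσ.1 e he, hτ.1 e he],
    fun e => by simp [hσ.2 e, hτ.2 e, add_comm]⟩
  neg_mem' {σ} hσ := ⟨fun e he => by simp [hσ.1 e he], fun e => by simp [hσ.2 e]⟩

lemma box_finite (m N : ℕ) : {x : Site m | inBox m N x}.Finite :=
  (Set.Finite.pi fun _ => Set.finite_Icc (-(N : ℤ)) N).subset fun _ hx =>
    Set.mem_univ_pi.2 fun i => abs_le.1 (hx i)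

lemma C1_finite (m N : ℕ) : (C1 m N).Finite := by
  have hinj : Function.Injective fun e : OEdge m => (e.base, e.dir, e.ori) := by
    rintro ⟨⟩ ⟨⟩ h
    simp_all
  exact (((box_finite m N).prod Set.finite_univ).preimage hinj.injOn).subset
    fun e he => ⟨he.1, trivial⟩

lemma C2_finite (m N : ℕ) : (C2 m N).Finite := by
  have hinj : Function.Injective fun p : OPlaq m => (p.base, p.dir1, p.dir2, p.ori) := by
    rintro ⟨⟩ ⟨⟩ h
    simp_all
  exact (((box_finite m N).prod Set.finite_univ).preimage hinj.injOn).subset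
    fun p hp => ⟨hp.2 p.base (List.mem_cons_self ..), trivial⟩

instance (m N : ℕ) : Finite (omega1Subgroup m N) := by
  have : Finite (C1 m N) := (C1_finite m N).to_subtype
  refine Finite.of_injective (fun (σ : omega1Subgroup m N) (e : C1 m N) => σ.1 e)
    fun σ τ h => ?_
  ext e
  by_cases he : e ∈ C1 m N
  · exact congrFun h ⟨e, he⟩
  · rw [σ.2.1 e he, τ.2.1 e he]

noncomputable instance (m N : ℕ) : Fintype (omega1Subgroup m N) := Fintype.ofFinite _

lemma finsum_mem_Omega1 (m N : ℕ) (f : (OEdge m → ZMod 2) → ℝ) :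
    ∑ᶠ σ ∈ Omega1 m N, f σ = ∑ σ : omega1Subgroup m N, f σ :=
  (finsum_set_coe_eq_finsum_mem _).symm.trans (finsum_eq_sum_of_fintype (α := omega1Subgroup m N) _)

lemma exp_neg_mul_action (m N : ℕ) (β : ℝ) (σ : OEdge m → ZMod 2) :
    Real.exp (-β * action m N σ) =
      boltzmann (C2_finite m N).toFinset plaqChar (fun _ => β) σ := by
  rw [action, finsum_mem_eq_finite_toFinset_sum _ (C2_finite m N), neg_mul_neg, Finset.mul_sum,
    Real.exp_sum]
  rfl

lemma Ewilson_eq_gibbs_mean (m N : ℕ) (β : ℝ) {γ : OEdge m → ℤ}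
    (hγ : (Function.support γ).Finite) :
    let ε := fun p => (plaqChar p).compAddMonoidHom (omega1Subgroup m N).subtype
    let B := boltzmann (C2_finite m N).toFinset ε (fun _ => β)
    Ewilson m N β γ =
      (∑ σ, (wilsonChar hγ).compAddMonoidHom (omega1Subgroup m N).subtype σ * B σ) / ∑ σ, B σ := by
  simp only [Ewilson, Eexp, finsum_mem_Omega1, exp_neg_mul_action]
  rfl

theorem wilson_monotone_general (m N : ℕ)
    (γ : OEdge m → ℤ) (hγ : LoopIn m N γ) :
    ∀ β₁ β₂ : ℝ, 0 ≤ β₁ → β₁ ≤ β₂ → Ewilson m N β₁ γ ≤ Ewilson m N β₂ γ := by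
  intro β₁ β₂ h₀ h₁₂
  rw [Ewilson_eq_gibbs_mean m N β₁ hγ.1.finite_supp,
    Ewilson_eq_gibbs_mean m N β₂ hγ.1.finite_supp]
  exact gibbs_mean_mono _ _ _ h₀ h₁₂

/-- **Monotonicity in the inverse temperature** (Proposition 7(ii)): for every loop `γ`
supported in `B_N` with `𝒞_γ` nonempty, `β ↦ E_{N,β}[W_γ]` is nondecreasing on `[0,∞)`. -/
theorem wilson_monotone (m N : ℕ) (hm : 3 ≤ m) (hN : 1 ≤ N)
    (γ : OEdge m → ℤ) (hγ : LoopIn m N γ) (hne : (CurSet m N γ).Nonempty) :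
    ∀ β₁ β₂ : ℝ, 0 ≤ β₁ → β₁ ≤ β₂ → Ewilson m N β₁ γ ≤ Ewilson m N β₂ γ :=
  wilson_monotone_general m N γ hγ

end LGT
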